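/- arXiv:2212.07031 — 2 statements merged into one kernel-verified Lean document; each statement's English description precedes it below -/
import Mathlib

section
/- Let ν be a Borel measure on (0,∞), β > 0 and c₀ ≥ 0 such that ∫_{(0,∞)} s dν(s) ≤ c₀ and ∫_{(z,∞)} s dν(s) ≤ c₀ (ln(1+z))^{−β} for every z ≥ 1. Then for every σ ∈ (0, β) there is a constant C depending only on c₀, β, σ such that ∫_{(0,∞)} s (ln(1+s))^σ dν(s) ≤ C. -/
/-!
Cut `(0, ∞)` at the points `zₙ = exp (2ⁿ) - 1`, where `log (1 + zₙ) = 2ⁿ`. On `(0, z₀]` the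
weight `log (1 + s) ^ σ` is at most `1`, and on `(zₙ, zₙ₊₁]` it is at most `2 ^ ((n + 1) σ)`,
while the tail bound gives mass at most `c₀ 2 ^ (-n β)` to `s dν` beyond `zₙ`. The pieces are
therefore bounded by a geometric series of ratio `2 ^ (σ - β) < 1`.
-/

open MeasureTheory Real Set
open scoped ENNReal

noncomputable def logCut (n : ℕ) : ℝ := exp (2 ^ n) - 1

lemma log_one_add_logCut (n : ℕ) : log (1 + logCut n) = 2 ^ n := by
  simp [logCut]

lemma two_pow_le_logCut (n : ℕ) : (2 : ℝ) ^ n ≤ logCut n := by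
  have := add_one_le_exp ((2 : ℝ) ^ n)
  rw [logCut]
  linarith

lemma one_le_logCut (n : ℕ) : 1 ≤ logCut n :=
  (one_le_pow₀ one_le_two).trans (two_pow_le_logCut n)

lemma logCut_mono : Monotone logCut := fun _ _ hmn =>
  sub_le_sub_right (exp_le_exp.2 (pow_le_pow_right₀ one_le_two hmn)) 1

lemma iUnion_Ioc_logCut : ⋃ n, Ioc (logCut n) (logCut (n + 1)) = Ioi (logCut 0) := by
  have hunbdd : ¬BddAbove (range logCut) := by
    refine not_bddAbove_iff.2 fun x => ?_
    obtain ⟨n, hn⟩ := pow_unbounded_of_one_lt x one_lt_two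
    exact ⟨logCut n, mem_range_self n, hn.trans_le (two_pow_le_logCut n)⟩
  simpa using iUnion_Ioc_map_succ_eq_Ioi (fun n => logCut_mono (Nat.zero_le n)) hunbdd

lemma two_pow_succ_rpow_mul_two_pow_rpow_neg (n : ℕ) (σ β : ℝ) :
    ((2 : ℝ) ^ (n + 1)) ^ σ * ((2 : ℝ) ^ n) ^ (-β) = 2 ^ σ * (2 ^ (σ - β)) ^ n := by
  simp only [← rpow_natCast, ← rpow_mul zero_le_two, ← rpow_add zero_lt_two]
  push_cast
  ring_nf

lemma lintegral_Ioc_mul_log_rpow_le (ν : Measure ℝ) {σ a b : ℝ} (hσ : 0 ≤ σ)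
    (ha : 0 ≤ a) :
    ∫⁻ s in Ioc a b, ENNReal.ofReal (s * log (1 + s) ^ σ) ∂ν
      ≤ ENNReal.ofReal (log (1 + b) ^ σ) * ∫⁻ s in Ioi a, ENNReal.ofReal s ∂ν := by
  calc ∫⁻ s in Ioc a b, ENNReal.ofReal (s * log (1 + s) ^ σ) ∂ν
      ≤ ∫⁻ s in Ioc a b, ENNReal.ofReal (log (1 + b) ^ σ) * ENNReal.ofReal s ∂ν := by
        refine setLIntegral_mono' measurableSet_Ioc fun s hs => ?_
        have hs0 : 0 ≤ s := ha.trans hs.1.le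
        have hlog : log (1 + s) ≤ log (1 + b) := log_le_log (by linarith) (by linarith [hs.2])
        have hlog0 : 0 ≤ log (1 + s) := log_nonneg (by linarith)
        rw [← ENNReal.ofReal_mul (rpow_nonneg (hlog0.trans hlog) σ), mul_comm]
        exact ENNReal.ofReal_le_ofReal
          (mul_le_mul_of_nonneg_right (rpow_le_rpow hlog0 hlog hσ) hs0)
    _ = ENNReal.ofReal (log (1 + b) ^ σ) * ∫⁻ s in Ioc a b, ENNReal.ofReal s ∂ν :=
        lintegral_const_mul' _ _ ENNReal.ofReal_ne_top
    _ ≤ ENNReal.ofReal (log (1 + b) ^ σ) * ∫⁻ s in Ioi a, ENNReal.ofReal s ∂ν := by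
        gcongr
        exact Ioc_subset_Ioi_self

theorem lintegral_mul_log_rpow_le (ν : Measure ℝ) {σ β : ℝ} (hσ : 0 ≤ σ) {c : ℝ≥0∞}
    (h0 : ∫⁻ s in Ioi 0, ENNReal.ofReal s ∂ν ≤ c)
    (h1 : ∀ z : ℝ, 1 ≤ z →
      ∫⁻ s in Ioi z, ENNReal.ofReal s ∂ν ≤ c * ENNReal.ofReal (log (1 + z) ^ (-β))) :
    ∫⁻ s in Ioi 0, ENNReal.ofReal (s * log (1 + s) ^ σ) ∂ν
      ≤ c * (1 + ENNReal.ofReal (2 ^ σ) * (1 - ENNReal.ofReal (2 ^ (σ - β)))⁻¹) := by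
  set f : ℝ → ℝ≥0∞ := fun s => ENNReal.ofReal (s * log (1 + s) ^ σ)
  have hfirst : ∫⁻ s in Ioc 0 (logCut 0), f s ∂ν ≤ c := by
    have := lintegral_Ioc_mul_log_rpow_le ν hσ le_rfl (b := logCut 0)
    rw [log_one_add_logCut, pow_zero, one_rpow, ENNReal.ofReal_one, one_mul] at this
    exact this.trans h0
  have hpiece (n : ℕ) : ∫⁻ s in Ioc (logCut n) (logCut (n + 1)), f s ∂ν
      ≤ c * (ENNReal.ofReal (2 ^ σ) * ENNReal.ofReal (2 ^ (σ - β)) ^ n) := by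
    calc ∫⁻ s in Ioc (logCut n) (logCut (n + 1)), f s ∂ν
        ≤ ENNReal.ofReal (((2 : ℝ) ^ (n + 1)) ^ σ)
            * (c * ENNReal.ofReal (((2 : ℝ) ^ n) ^ (-β))) := by
          have := lintegral_Ioc_mul_log_rpow_le ν hσ (zero_le_one.trans (one_le_logCut n))
            (b := logCut (n + 1))
          rw [log_one_add_logCut] at this
          refine this.trans (mul_le_mul_right ?_ _)
          simpa only [log_one_add_logCut] using h1 _ (one_le_logCut n)
      _ = c * (ENNReal.ofReal (2 ^ σ) * ENNReal.ofReal (2 ^ (σ - β)) ^ n) := by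
          rw [mul_left_comm, ← ENNReal.ofReal_mul (by positivity),
            two_pow_succ_rpow_mul_two_pow_rpow_neg, ENNReal.ofReal_mul (by positivity),
            ENNReal.ofReal_pow (by positivity)]
  calc ∫⁻ s in Ioi 0, f s ∂ν
      = ∫⁻ s in Ioc 0 (logCut 0) ∪ ⋃ n, Ioc (logCut n) (logCut (n + 1)), f s ∂ν := by
        rw [iUnion_Ioc_logCut, Ioc_union_Ioi_eq_Ioi (zero_le_one.trans (one_le_logCut 0))]
    _ ≤ ∫⁻ s in Ioc 0 (logCut 0), f s ∂ν
          + ∑' n, ∫⁻ s in Ioc (logCut n) (logCut (n + 1)), f s ∂ν :=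
        (lintegral_union_le _ _ _).trans (add_le_add_right (lintegral_iUnion_le _ _) _)
    _ ≤ c + ∑' n, c * (ENNReal.ofReal (2 ^ σ) * ENNReal.ofReal (2 ^ (σ - β)) ^ n) :=
        add_le_add hfirst (ENNReal.tsum_le_tsum hpiece)
    _ = c * (1 + ENNReal.ofReal (2 ^ σ) * (1 - ENNReal.ofReal (2 ^ (σ - β)))⁻¹) := by
        rw [ENNReal.tsum_mul_left, ENNReal.tsum_mul_left, ENNReal.tsum_geometric, mul_add, mul_one]

theorem stmt_17_general (β c₀ σ : ℝ) (hσ : σ ∈ Set.Ioo (0:ℝ) β) :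
    ∃ C : ℝ, ∀ ν : Measure ℝ,
      (∫⁻ s in Set.Ioi (0:ℝ), ENNReal.ofReal s ∂ν) ≤ ENNReal.ofReal c₀ →
      (∀ z : ℝ, 1 ≤ z →
        (∫⁻ s in Set.Ioi z, ENNReal.ofReal s ∂ν)
          ≤ ENNReal.ofReal (c₀ * Real.log (1 + z) ^ (-β))) →
      (∫⁻ s in Set.Ioi (0:ℝ), ENNReal.ofReal (s * Real.log (1 + s) ^ σ) ∂ν)
        ≤ ENNReal.ofReal C := by
  have hr : ENNReal.ofReal (2 ^ (σ - β)) < 1 :=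
    ENNReal.ofReal_lt_one.2 (rpow_lt_one_of_one_lt_of_neg one_lt_two (by linarith [hσ.2]))
  set B :=
    ENNReal.ofReal c₀ * (1 + ENNReal.ofReal (2 ^ σ) * (1 - ENNReal.ofReal (2 ^ (σ - β)))⁻¹)
  have hB : B ≠ ∞ := ENNReal.mul_ne_top ENNReal.ofReal_ne_top <| ENNReal.add_ne_top.2
    ⟨ENNReal.one_ne_top, ENNReal.mul_ne_top ENNReal.ofReal_ne_top
      (ENNReal.inv_ne_top.2 (tsub_pos_of_lt hr).ne')⟩
  refine ⟨B.toReal, fun ν h0 h1 => ?_⟩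
  rw [ENNReal.ofReal_toReal hB]
  refine lintegral_mul_log_rpow_le ν hσ.1.le h0 fun z hz => (h1 z hz).trans_eq ?_
  exact ENNReal.ofReal_mul' (rpow_nonneg (log_nonneg (by linarith)) _)

/-- if `∫ s dν ≤ c₀` and `∫_{(z,∞)} s dν ≤ c₀ (ln(1+z))^{−β}` for `z ≥ 1`,
then for every `σ ∈ (0, β)` one has `∫ s (ln(1+s))^σ dν ≤ C` with `C = C(c₀, β, σ)`. -/
theorem stmt_17 (β c₀ σ : ℝ) (hβ : 0 < β) (hc₀ : 0 ≤ c₀) (hσ : σ ∈ Set.Ioo (0:ℝ) β) :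
    ∃ C : ℝ, ∀ ν : Measure ℝ,
      (∫⁻ s in Set.Ioi (0:ℝ), ENNReal.ofReal s ∂ν) ≤ ENNReal.ofReal c₀ →
      (∀ z : ℝ, 1 ≤ z →
        (∫⁻ s in Set.Ioi z, ENNReal.ofReal s ∂ν)
          ≤ ENNReal.ofReal (c₀ * Real.log (1 + z) ^ (-β))) →
      (∫⁻ s in Set.Ioi (0:ℝ), ENNReal.ofReal (s * Real.log (1 + s) ^ σ) ∂ν)
        ≤ ENNReal.ofReal C :=
  stmt_17_general β c₀ σ hσ
end

section
/- Let C > 5, c₁ > 0, R ∈ (0, e^{−1}), k ≥ 0 and μ ∈ (0, C). Let Γ, F : (0,R] → ℝ satisfy |Γ(r)| ≤ k |ln r|^{−μ} and |F(r)| ≤ c₁ √r for all r ∈ (0,R]. Let W : [0,R] → [0,∞) be absolutely continuous with W(R) ≤ c₁ and suppose that (r |ln r| / C) W′(r) − W(r) ≥ −Γ(r) − F(r) for almost every r ∈ (0,R]. Then there exists a constant c₂, depending only on C, c₁, R and μ, such that W(r) ≤ c₂ ( |ln r|^{−C} + k |ln r|^{−μ} ) for all r ∈ (0,R]. -/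
/-!
Multiplying the inequality by the nonnegative factor `C |ln s|^(C-1) / s` turns its left-hand
side into the derivative of `|ln s|^C W(s)`, so integrating over `[r, R]` gives
`|ln r|^C W(r) ≤ |ln R|^C W(R) + ∫_r^R C |ln s|^(C-1) (|Γ(s)| + |F(s)|) / s ds`.
The `Γ`-part integrates in closed form to at most `C k |ln r|^(C-μ) / (C-μ)`. The `F`-part is
bounded uniformly in `r`: since `|ln s|^(C-1) ≤ (4(C-1))^(C-1) s^(-1/4)`, its integrand is
dominated by a multiple of the integrable function `s^(-3/4)`. Dividing by `|ln r|^C` gives the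
bound.
-/

open MeasureTheory Real Set

theorem AbsolutelyContinuousOnInterval.integral_le_sub_of_ae_le_hasDerivAt
    {f f' ψ : ℝ → ℝ} {a b : ℝ} (hab : a ≤ b) (hf : AbsolutelyContinuousOnInterval f a b)
    (hψ : IntervalIntegrable ψ volume a b)
    (hf' : ∀ᵐ x, x ∈ Ioo a b → HasDerivAt f (f' x) x)
    (hle : ∀ᵐ x ∂volume.restrict (Ioc a b), ψ x ≤ f' x) :
    ∫ x in a..b, ψ x ≤ f b - f a := by
  rw [← hf.integral_deriv_eq_sub, intervalIntegral.integral_of_le hab,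
    intervalIntegral.integral_of_le hab]
  refine setIntegral_mono_ae_restrict hψ.1 (hf.intervalIntegrable_deriv.1) ?_
  filter_upwards [hle, ae_restrict_of_ae hf', ae_restrict_of_ae (volume.ae_ne b),
    ae_restrict_mem measurableSet_Ioc] with x hψx hf'x hxb hx
  exact (hf'x ⟨hx.1, lt_of_le_of_ne hx.2 hxb⟩).deriv ▸ hψx

theorem integral_le_mul_sub_mul_of_ae_le {g g' W W' ψ : ℝ → ℝ} {a b : ℝ} (hab : a ≤ b)
    (hg : AbsolutelyContinuousOnInterval g a b) (hg' : ∀ x ∈ Ioo a b, HasDerivAt g (g' x) x)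
    (hW' : IntervalIntegrable W' volume a b)
    (hW : ∀ x ∈ Icc a b, W x = W a + ∫ t in a..x, W' t)
    (hψ : IntervalIntegrable ψ volume a b)
    (hle : ∀ᵐ x ∂volume.restrict (Ioc a b), ψ x ≤ g' x * W x + g x * W' x) :
    ∫ x in a..b, ψ x ≤ g b * W b - g a * W a := by
  set P : ℝ → ℝ := fun x => W a + ∫ t in a..x, W' t
  have hP : AbsolutelyContinuousOnInterval P a b :=
    (LipschitzWith.const (W a)).lipschitzOnWith.absolutelyContinuousOnInterval.fun_add
      (hW'.absolutelyContinuousOnInterval_intervalIntegral left_mem_uIcc)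
  have hPW : EqOn P W (Icc a b) := fun x hx => (hW x hx).symm
  have key := (hg.fun_mul hP).integral_le_sub_of_ae_le_hasDerivAt hab hψ
    (f' := fun x => g' x * W x + g x * W' x) ?_ hle
  · simpa only [hPW (left_mem_Icc.2 hab), hPW (right_mem_Icc.2 hab)] using key
  · filter_upwards [hW'.ae_hasDerivAt_integral] with x hx hxI
    have hP' : HasDerivAt P (W' x) x :=
      (hx (Ioo_subset_Icc_self.trans (uIcc_of_le hab).symm.subset hxI) a left_mem_uIcc).const_add _
    simpa only [hPW (Ioo_subset_Icc_self hxI)] using (hg' x hxI).fun_mul hP'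

theorem eq_add_intervalIntegral_of_mem_Icc {W W' : ℝ → ℝ} {a b c : ℝ}
    (hW' : IntervalIntegrable W' volume a b)
    (hW : ∀ x ∈ Icc a b, W x = W a + ∫ t in a..x, W' t) (hc : c ∈ Icc a b) :
    ∀ x ∈ Icc c b, W x = W c + ∫ t in c..x, W' t := by
  intro x hx
  have hsub : ∀ y ∈ Icc a b, IntervalIntegrable W' volume a y := fun y hy =>
    hW'.mono_set (uIcc_subset_uIcc_left (uIcc_of_le (hc.1.trans hc.2) ▸ ⟨hy.1, hy.2⟩))
  have hx' : x ∈ Icc a b := ⟨hc.1.trans hx.1, hx.2⟩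
  rw [hW x hx', hW c hc, ← intervalIntegral.integral_interval_sub_left (hsub x hx') (hsub c hc)]
  ring

theorem hasDerivAt_neg_log_rpow (p : ℝ) {s : ℝ} (hs0 : 0 < s) (hs1 : s < 1) :
    HasDerivAt (fun x => (-log x) ^ p) (-(p * (-log s) ^ (p - 1) * s⁻¹)) s :=
  ((hasDerivAt_log hs0.ne').fun_neg.rpow_const
    (Or.inl (neg_ne_zero.2 (log_neg hs0 hs1).ne))).congr_deriv (by ring)

theorem contDiffOn_neg_log_rpow (n : WithTop ℕ∞) (p : ℝ) :
    ContDiffOn ℝ n (fun x => (-log x) ^ p) (Ioo 0 1) :=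
  ((contDiffOn_log.mono fun _ hx => ne_of_gt hx.1).neg).rpow_const_of_ne
    fun _ hx => neg_ne_zero.2 (log_neg hx.1 hx.2).ne

theorem integral_neg_log_rpow_mul_inv {q a b : ℝ} (hq : q ≠ 0) (h : uIcc a b ⊆ Ioo 0 1) :
    ∫ s in a..b, (-log s) ^ (q - 1) * s⁻¹ = ((-log a) ^ q - (-log b) ^ q) / q := by
  have hderiv : ∀ x ∈ uIcc a b,
      HasDerivAt (fun x => -(-log x) ^ q / q) ((-log x) ^ (q - 1) * x⁻¹) x := fun x hx =>
    ((hasDerivAt_neg_log_rpow q (h hx).1 (h hx).2).neg.div_const q).congr_deriv (by field_simp)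
  have hcont : ContinuousOn (fun s => (-log s) ^ (q - 1) * s⁻¹) (uIcc a b) :=
    ((contDiffOn_neg_log_rpow 0 _).continuousOn.mono h).mul
      (continuousOn_inv₀.mono fun x hx => ne_of_gt (h hx).1)
  rw [intervalIntegral.integral_eq_sub_of_hasDerivAt hderiv hcont.intervalIntegrable]
  ring

theorem integral_neg_log_rpow_mul_inv_le {q a b : ℝ} (hq : 0 < q) (ha : 0 < a) (hab : a ≤ b)
    (hb : b < 1) :
    ∫ s in a..b, (-log s) ^ (q - 1) * s⁻¹ ≤ (-log a) ^ q / q := by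
  rw [integral_neg_log_rpow_mul_inv hq.ne' (by rw [uIcc_of_le hab]; exact Icc_subset_Ioo ha hb)]
  have : 0 ≤ (-log b) ^ q := rpow_nonneg (neg_nonneg.2 (log_nonpos (ha.le.trans hab) hb.le)) q
  gcongr
  linarith

theorem neg_log_rpow_le {p ε s : ℝ} (hp : 0 < p) (hε : 0 < ε) (hs0 : 0 < s) (hs1 : s ≤ 1) :
    (-log s) ^ p ≤ (p / ε) ^ p * s ^ (-ε) := by
  have hlog : -log s ≤ p / ε * s ^ (-(ε / p)) := by
    have := log_le_rpow_div (inv_nonneg.2 hs0.le) (div_pos hε hp)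
    rw [log_inv, inv_rpow hs0.le, ← rpow_neg hs0.le, div_div_eq_mul_div] at this
    exact this.trans_eq (by ring)
  calc (-log s) ^ p ≤ (p / ε * s ^ (-(ε / p))) ^ p :=
        rpow_le_rpow (neg_nonneg.2 (log_nonpos hs0.le hs1)) hlog hp.le
    _ = (p / ε) ^ p * s ^ (-ε) := by
        rw [mul_rpow (by positivity) (by positivity), ← rpow_mul hs0.le]
        congr 2
        field_simp

theorem integral_neg_log_rpow_mul_rpow_le {p a b : ℝ} (hp : 0 < p) (ha : 0 < a) (hab : a ≤ b)
    (hb : b < 1) :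
    ∫ s in a..b, (-log s) ^ p * s ^ (-(1 / 2) : ℝ) ≤ 4 * (4 * p) ^ p := by
  have hsub : uIcc a b ⊆ Ioo 0 1 := by
    rw [uIcc_of_le hab]; exact Icc_subset_Ioo ha hb
  have hrpow : ∀ q : ℝ, ContinuousOn (fun s : ℝ => s ^ q) (uIcc a b) := fun q =>
    continuousOn_id.rpow_const fun x hx => Or.inl (ne_of_gt (hsub hx).1)
  have hpt : ∀ s ∈ Icc a b,
      (-log s) ^ p * s ^ (-(1 / 2) : ℝ) ≤ (4 * p) ^ p * s ^ (-(3 / 4) : ℝ) := by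
    intro s hs
    have hs0 : 0 < s := ha.trans_le hs.1
    calc (-log s) ^ p * s ^ (-(1 / 2) : ℝ)
        ≤ (p / 4⁻¹) ^ p * s ^ (-4⁻¹ : ℝ) * s ^ (-(1 / 2) : ℝ) := by
          gcongr
          exact neg_log_rpow_le hp (by norm_num) hs0 (hs.2.trans hb.le)
      _ = (4 * p) ^ p * s ^ (-(3 / 4) : ℝ) := by
          rw [mul_assoc, ← rpow_add hs0, div_inv_eq_mul, mul_comm p]
          norm_num
  calc ∫ s in a..b, (-log s) ^ p * s ^ (-(1 / 2) : ℝ)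
      ≤ ∫ s in a..b, (4 * p) ^ p * s ^ (-(3 / 4) : ℝ) :=
        intervalIntegral.integral_mono_on hab
          (((contDiffOn_neg_log_rpow 0 p).continuousOn.mono hsub).mul (hrpow _)).intervalIntegrable
          (continuousOn_const.mul (hrpow _)).intervalIntegrable hpt
    _ = (4 * p) ^ p * (4 * (b ^ (4⁻¹ : ℝ) - a ^ (4⁻¹ : ℝ))) := by
        rw [intervalIntegral.integral_const_mul, integral_rpow (Or.inl (by norm_num))]
        rw [show (-(3 / 4) + 1 : ℝ) = 4⁻¹ by norm_num]
        ring
    _ ≤ 4 * (4 * p) ^ p := by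
        have hb' : b ^ (4⁻¹ : ℝ) ≤ 1 := rpow_le_one (ha.le.trans hab) hb.le (by norm_num)
        have ha' : 0 ≤ a ^ (4⁻¹ : ℝ) := rpow_nonneg ha.le _
        have : 0 ≤ (4 * p) ^ p := by positivity
        nlinarith

theorem le_neg_log_rpow_deriv_mul {C k c₁ μ s w w' γ φ : ℝ} (hC : 0 < C) (hs0 : 0 < s)
    (hs1 : s < 1) (hγ : |γ| ≤ k * (-log s) ^ (-μ)) (hφ : |φ| ≤ c₁ * √s)
    (h : -γ - φ ≤ s * (-log s) / C * w' - w) :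
    -(C * k * ((-log s) ^ (C - μ - 1) * s⁻¹)
        + C * c₁ * ((-log s) ^ (C - 1) * s ^ (-(1 / 2) : ℝ)))
      ≤ -(C * (-log s) ^ (C - 1) * s⁻¹) * w + (-log s) ^ C * w' := by
  set L := -log s
  have hL : 0 < L := neg_pos.2 (log_neg hs0 hs1)
  have hderiv : -(C * L ^ (C - 1) * s⁻¹) * w + L ^ C * w'
      = C * L ^ (C - 1) * s⁻¹ * (s * L / C * w' - w) := by
    rw [rpow_sub_one hL.ne']
    field_simp
    ring
  have hbound :
      -(C * k * (L ^ (C - μ - 1) * s⁻¹) + C * c₁ * (L ^ (C - 1) * s ^ (-(1 / 2) : ℝ)))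
      = C * L ^ (C - 1) * s⁻¹ * -(k * L ^ (-μ) + c₁ * √s) := by
    have hμ : L ^ (C - μ - 1) = L ^ (C - 1) * L ^ (-μ) := by
      rw [← rpow_add hL]; ring_nf
    have hsqrt : s ^ (-(1 / 2) : ℝ) = √s * s⁻¹ := by
      rw [sqrt_eq_rpow, ← rpow_neg_one, ← rpow_add hs0]; norm_num
    rw [hμ, hsqrt]; ring
  rw [hderiv, hbound]
  gcongr
  linarith [le_abs_self γ, le_abs_self φ]

theorem neg_log_rpow_mul_le_of_ae_le {C c₁ R μ k r : ℝ} {Γ F W W' : ℝ → ℝ} (hC : 1 < C)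
    (hc₁ : 0 ≤ c₁) (hμ : μ < C) (hk : 0 ≤ k) (hR : R < 1) (hr : r ∈ Ioc 0 R)
    (hΓ : ∀ s ∈ Ioc r R, |Γ s| ≤ k * |log s| ^ (-μ))
    (hF : ∀ s ∈ Ioc r R, |F s| ≤ c₁ * √s)
    (hW' : IntervalIntegrable W' volume r R)
    (hW : ∀ x ∈ Icc r R, W x = W r + ∫ t in r..x, W' t)
    (hineq : ∀ᵐ s ∂volume.restrict (Ioc r R), s * |log s| / C * W' s - W s ≥ -Γ s - F s) :
    (-log r) ^ C * W r ≤ (-log R) ^ C * W R + k * (C / (C - μ)) * (-log r) ^ (C - μ)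
      + c₁ * (4 * C * (4 * (C - 1)) ^ (C - 1)) := by
  obtain ⟨hr0, hrR⟩ := hr
  have hC0 : 0 < C := by linarith
  have hsub : uIcc r R ⊆ Ioo 0 1 := by
    rw [uIcc_of_le hrR]; exact Icc_subset_Ioo hr0 hR
  have hcont : ∀ p : ℝ, ContinuousOn (fun s => (-log s) ^ p) (uIcc r R) := fun p =>
    (contDiffOn_neg_log_rpow 0 p).continuousOn.mono hsub
  have hA : IntervalIntegrable (fun s => (-log s) ^ (C - μ - 1) * s⁻¹) volume r R :=
    ((hcont _).mul (continuousOn_inv₀.mono fun x hx => ne_of_gt (hsub hx).1)).intervalIntegrable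
  have hB : IntervalIntegrable (fun s => (-log s) ^ (C - 1) * s ^ (-(1 / 2) : ℝ)) volume r R :=
    ((hcont _).mul (continuousOn_id.rpow_const fun x hx =>
      Or.inl (ne_of_gt (hsub hx).1))).intervalIntegrable
  have hcomp := integral_le_mul_sub_mul_of_ae_le hrR
    (g := fun s => (-log s) ^ C) (g' := fun s => -(C * (-log s) ^ (C - 1) * s⁻¹))
    (ψ := fun s => -(C * k * ((-log s) ^ (C - μ - 1) * s⁻¹)
      + C * c₁ * ((-log s) ^ (C - 1) * s ^ (-(1 / 2) : ℝ))))
    (((contDiffOn_neg_log_rpow 1 C).mono hsub).absolutelyContinuousOnInterval)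
    (fun x hx => hasDerivAt_neg_log_rpow C (hr0.trans hx.1) (hx.2.trans hR)) hW' hW
    ((hA.const_mul _).add (hB.const_mul _)).neg ?_
  · rw [intervalIntegral.integral_neg, intervalIntegral.integral_add (hA.const_mul _)
      (hB.const_mul _), intervalIntegral.integral_const_mul,
      intervalIntegral.integral_const_mul] at hcomp
    have hΓpart := mul_le_mul_of_nonneg_left
      (integral_neg_log_rpow_mul_inv_le (sub_pos.2 hμ) hr0 hrR hR) (by positivity : 0 ≤ C * k)
    have hFpart := mul_le_mul_of_nonneg_left
      (integral_neg_log_rpow_mul_rpow_le (sub_pos.2 hC) hr0 hrR hR) (by positivity : 0 ≤ C * c₁)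
    linear_combination hcomp + hΓpart + hFpart
  · filter_upwards [hineq, ae_restrict_mem measurableSet_Ioc] with s hs hsI
    have hlog : |log s| = -log s := abs_of_neg (log_neg (hr0.trans hsI.1) (hsI.2.trans_lt hR))
    rw [hlog] at hs
    exact le_neg_log_rpow_deriv_mul hC0 (hr0.trans hsI.1) (hsI.2.trans_lt hR)
      (hlog ▸ hΓ s hsI) (hF s hsI) hs

theorem le_mul_rpow_neg_add_of_rpow_mul_le {L C μ w a b c k : ℝ} (hL : 0 < L) (hk : 0 ≤ k)
    (ha : a ≤ c) (hb : b ≤ c) (h : L ^ C * w ≤ a + k * b * L ^ (C - μ)) :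
    w ≤ c * (L ^ (-C) + k * L ^ (-μ)) := by
  have hLC : 0 < L ^ C := rpow_pos_of_pos hL C
  calc w ≤ (a + k * b * L ^ (C - μ)) / L ^ C := (le_div_iff₀' hLC).2 h
    _ = a * L ^ (-C) + k * b * L ^ (-μ) := by
        rw [rpow_neg hL.le, rpow_neg hL.le, rpow_sub hL]
        field_simp
    _ ≤ c * L ^ (-C) + k * c * L ^ (-μ) := by
        have := rpow_nonneg hL.le (-μ)
        gcongr
    _ = c * (L ^ (-C) + k * L ^ (-μ)) := by ring

/-- a degenerate differential inequality. If `W` is absolutely continuous on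
`[0,R]` (encoded as the integral of an integrable `W'`), nonnegative, `W(R) ≤ c₁`, and
`(r|ln r|/C) W'(r) − W(r) ≥ −Γ(r) − F(r)` a.e., with `|Γ(r)| ≤ k |ln r|^{−μ}` and
`|F(r)| ≤ c₁ √r`, then `W(r) ≤ c₂ (|ln r|^{−C} + k |ln r|^{−μ})` on `(0,R]`, where `c₂`
depends only on `C, c₁, R, μ`. -/
theorem stmt_18 (C c₁ R μ : ℝ) (hC : 5 < C) (hc₁ : 0 < c₁)
    (hR : R ∈ Set.Ioo (0:ℝ) (Real.exp (-1))) (hμ : μ ∈ Set.Ioo (0:ℝ) C) :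
    ∃ c₂ : ℝ, ∀ (k : ℝ), 0 ≤ k → ∀ (Γ F W W' : ℝ → ℝ),
      (∀ r ∈ Set.Ioc (0:ℝ) R, |Γ r| ≤ k * |Real.log r| ^ (-μ)) →
      (∀ r ∈ Set.Ioc (0:ℝ) R, |F r| ≤ c₁ * Real.sqrt r) →
      (∀ r ∈ Set.Icc (0:ℝ) R, 0 ≤ W r) →
      W R ≤ c₁ →
      IntervalIntegrable W' volume 0 R →
      (∀ x ∈ Set.Icc (0:ℝ) R, W x = W 0 + ∫ s in (0:ℝ)..x, W' s) →
      (∀ᵐ r ∂(volume.restrict (Set.Ioc (0:ℝ) R)),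
        (r * |Real.log r| / C) * W' r - W r ≥ -(Γ r) - F r) →
      ∀ r ∈ Set.Ioc (0:ℝ) R, W r ≤ c₂ * (|Real.log r| ^ (-C) + k * |Real.log r| ^ (-μ)) := by
  obtain ⟨hR0, hRe⟩ := hR
  have hR1 : R < 1 := hRe.trans (exp_lt_one_iff.2 (by norm_num))
  refine ⟨max (c₁ * ((-log R) ^ C + 4 * C * (4 * (C - 1)) ^ (C - 1))) (C / (C - μ)),
    fun k hk Γ F W W' hΓ hF _ hWR hW' hW hineq r hr => ?_⟩
  have hrR : Ioc r R ⊆ Ioc 0 R := Ioc_subset_Ioc_left hr.1.le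
  have hweighted := neg_log_rpow_mul_le_of_ae_le (by linarith) hc₁.le hμ.2 hk hR1 hr
    (fun s hs => hΓ s (hrR hs)) (fun s hs => hF s (hrR hs))
    (hW'.mono_set (by rw [uIcc_of_le hR0.le, uIcc_of_le hr.2]; exact Icc_subset_Icc_left hr.1.le))
    (eq_add_intervalIntegral_of_mem_Icc hW' hW ⟨hr.1.le, hr.2⟩)
    (ae_restrict_of_ae_restrict_of_subset hrR hineq)
  have hWR' : (-log R) ^ C * W R ≤ (-log R) ^ C * c₁ :=
    mul_le_mul_of_nonneg_left hWR (rpow_nonneg (neg_nonneg.2 (log_nonpos hR0.le hR1.le)) C)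
  rw [abs_of_neg (log_neg hr.1 (hr.2.trans_lt hR1))]
  refine le_mul_rpow_neg_add_of_rpow_mul_le (neg_pos.2 (log_neg hr.1 (hr.2.trans_lt hR1))) hk
    (le_max_left _ _) (le_max_right _ _) ?_
  linarith
end
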